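/- For every ε > 0 and Δ > 0 there exist m ∈ ℕ with m ≥ 1, scores s, s' : Fin m → ℝ with |s(j) − s'(j)| ≤ Δ for every j, and an index i, such that with ν = Lap(Δ/ε) the Laplace measure of scale Δ/ε: ν^{⊗m}({η : ∀ j ≠ i, s(i) + η(i) > s(j) + η(j)}) > exp(ε) · ν^{⊗m}({η : ∀ j ≠ i, s'(i) + η(i) > s'(j) + η(j)}). In other words, Report-Noisy-Max with under-calibrated Laplace noise of scale Δ/ε (instead of the required 2Δ/ε) does not satisfy ε-differential privacy for score functions of sensitivity Δ. -/

import Mathlib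

/-!
Take `m = 2`, `i = 0`, `s = (Δ, Δ)` and `s' = (0, 2Δ)`. Candidate `0` wins iff `η 0 - η 1 > c`,
where `c = s 1 - s 0` is the score gap (`0` for `s`, `2Δ` for `s'`). For independent `Lap(b)` noise
and `c ≥ 0`, conditioning on `η 0` gives `P(η 0 - η 1 > c) = ∫ pdf x · cdf (x - c) dx
= e^{-c/b} (1/2 + c/(4b))`. With `b = Δ/ε` the two winning probabilities are `1/2` and
`e^{-2ε} (1 + ε)/2`, and `1 + ε < e^ε` gives `e^ε · e^{-2ε} (1 + ε)/2 < 1/2`.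
-/

open MeasureTheory

/-- The Laplace measure `Lap(b)` on `ℝ`, with density `x ↦ (1/(2b))·exp(−|x|/b)`
with respect to Lebesgue measure. -/
noncomputable def lapMeasure (b : ℝ) : Measure ℝ :=
  volume.withDensity fun x => ENNReal.ofReal (1 / (2 * b) * Real.exp (-|x| / b))

open Real Set

namespace Laplace

noncomputable def pdf (b x : ℝ) : ℝ := 1 / (2 * b) * exp (-|x| / b)

noncomputable def cdf (b t : ℝ) : ℝ := if t ≤ 0 then exp (t / b) / 2 else 1 - exp (-t / b) / 2

variable {b c t x : ℝ}

lemma pdf_nonneg (hb : 0 ≤ b) (x : ℝ) : 0 ≤ pdf b x := by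
  unfold pdf; positivity

lemma pdf_of_nonpos (hx : x ≤ 0) : pdf b x = exp (b⁻¹ * x) / (2 * b) := by
  rw [pdf, abs_of_nonpos hx]; field_simp

lemma pdf_of_nonneg (hx : 0 ≤ x) : pdf b x = exp (-b⁻¹ * x) / (2 * b) := by
  rw [pdf, abs_of_nonneg hx]; field_simp

@[fun_prop]
lemma measurable_pdf (b : ℝ) : Measurable (pdf b) := by
  unfold pdf; fun_prop

@[fun_prop]
lemma measurable_cdf (b : ℝ) : Measurable (cdf b) :=
  Measurable.ite measurableSet_Iic (by fun_prop) (by fun_prop)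

lemma cdf_mem_Icc (hb : 0 < b) (t : ℝ) : cdf b t ∈ Icc 0 1 := by
  unfold cdf
  split_ifs with ht
  · have : exp (t / b) ≤ 1 := exp_le_one_iff.2 (div_nonpos_of_nonpos_of_nonneg ht hb.le)
    constructor <;> linarith [exp_pos (t / b)]
  · have : exp (-t / b) ≤ 1 :=
      exp_le_one_iff.2 (div_nonpos_of_nonpos_of_nonneg (by linarith) hb.le)
    constructor <;> linarith [exp_pos (-t / b)]

lemma integrableOn_pdf_Iic (hb : 0 < b) (ht : t ≤ 0) : IntegrableOn (pdf b) (Iic t) :=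
  IntegrableOn.congr_fun ((integrableOn_exp_mul_Iic (inv_pos.2 hb) t).div_const _)
    (fun _ hx => (pdf_of_nonpos (le_trans hx ht)).symm) measurableSet_Iic

lemma integrableOn_pdf_Ioi (hb : 0 < b) (ht : 0 ≤ t) : IntegrableOn (pdf b) (Ioi t) :=
  IntegrableOn.congr_fun
    ((integrableOn_exp_mul_Ioi (neg_neg_iff_pos.2 (inv_pos.2 hb)) t).div_const _)
    (fun _ hx => (pdf_of_nonneg (ht.trans hx.le)).symm) measurableSet_Ioi

lemma integrable_pdf (hb : 0 < b) : Integrable (pdf b) := by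
  rw [← integrableOn_univ, ← Iic_union_Ioi (a := 0)]
  exact (integrableOn_pdf_Iic hb le_rfl).union (integrableOn_pdf_Ioi hb le_rfl)

lemma integral_pdf_Iic (hb : 0 < b) (ht : t ≤ 0) : ∫ x in Iic t, pdf b x = exp (t / b) / 2 := by
  rw [setIntegral_congr_fun measurableSet_Iic fun x hx => pdf_of_nonpos (le_trans hx ht),
    integral_div, integral_exp_mul_Iic (inv_pos.2 hb)]
  field_simp

lemma integral_pdf_Ioi (hb : 0 < b) (ht : 0 ≤ t) :
    ∫ x in Ioi t, pdf b x = exp (-t / b) / 2 := by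
  rw [setIntegral_congr_fun measurableSet_Ioi fun x hx => pdf_of_nonneg (ht.trans hx.le),
    integral_div, integral_exp_mul_Ioi (neg_neg_iff_pos.2 (inv_pos.2 hb))]
  field_simp

lemma integral_pdf (hb : 0 < b) : ∫ x, pdf b x = 1 := by
  rw [← intervalIntegral.integral_Iic_add_Ioi (integrableOn_pdf_Iic hb le_rfl)
      (integrableOn_pdf_Ioi hb le_rfl),
    integral_pdf_Iic hb le_rfl, integral_pdf_Ioi hb le_rfl]
  norm_num

lemma integral_pdf_Iio (hb : 0 < b) (t : ℝ) : ∫ x in Iio t, pdf b x = cdf b t := by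
  rw [cdf]
  split_ifs with ht
  · rw [← integral_Iic_eq_integral_Iio, integral_pdf_Iic hb ht]
  · rw [← integral_pdf hb, ← intervalIntegral.integral_Iio_add_Ici
      (integrable_pdf hb).integrableOn (integrable_pdf hb).integrableOn,
      integral_Ici_eq_integral_Ioi,
      integral_pdf_Ioi hb (by linarith)]
    ring

lemma integrable_pdf_mul_cdf_sub (hb : 0 < b) (c : ℝ) :
    Integrable fun x => pdf b x * cdf b (x - c) :=
  (integrable_pdf hb).mul_bdd (by fun_prop : Measurable _).aestronglyMeasurable
    (.of_forall fun x => by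
      obtain ⟨h0, h1⟩ := cdf_mem_Icc hb (x - c)
      rwa [norm_of_nonneg h0])

lemma integral_pdf_mul_cdf_sub_Iic_zero (hb : 0 < b) (hc : 0 ≤ c) :
    ∫ x in Iic 0, pdf b x * cdf b (x - c) = exp (-c / b) / 8 := by
  have h : EqOn (fun x => pdf b x * cdf b (x - c))
      (fun x => exp (-c / b) / (4 * b) * exp ((2 / b) * x)) (Iic 0) := fun x (hx : x ≤ 0) => by
    dsimp only
    rw [pdf_of_nonpos hx, cdf, if_pos (by linarith)]
    have key : exp (b⁻¹ * x) * exp ((x - c) / b) = exp (-c / b) * exp ((2 / b) * x) := by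
      rw [← exp_add, ← exp_add]; ring_nf
    linear_combination key / (4 * b)
  rw [setIntegral_congr_fun measurableSet_Iic h, integral_const_mul,
    integral_exp_mul_Iic (by positivity)]
  field_simp
  norm_num

lemma intervalIntegral_pdf_mul_cdf_sub (hc : 0 ≤ c) :
    ∫ x in (0)..c, pdf b x * cdf b (x - c) = c * exp (-c / b) / (4 * b) := by
  have h : EqOn (fun x => pdf b x * cdf b (x - c)) (fun _ => exp (-c / b) / (4 * b))
      (uIcc 0 c) := fun x hx => by
    rw [uIcc_of_le hc] at hx
    dsimp only
    rw [pdf_of_nonneg hx.1, cdf, if_pos (by linarith [hx.2])]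
    have key : exp (-b⁻¹ * x) * exp ((x - c) / b) = exp (-c / b) := by
      rw [← exp_add]; ring_nf
    linear_combination key / (4 * b)
  rw [intervalIntegral.integral_congr h, intervalIntegral.integral_const, smul_eq_mul]
  ring

lemma integral_pdf_mul_cdf_sub_Ioi (hb : 0 < b) (hc : 0 ≤ c) :
    ∫ x in Ioi c, pdf b x * cdf b (x - c) = 3 * exp (-c / b) / 8 := by
  have h : EqOn (fun x => pdf b x * cdf b (x - c))
      (fun x => 1 / (2 * b) * exp (-b⁻¹ * x) - exp (c / b) / (4 * b) * exp (-(2 / b) * x))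
      (Ioi c) := fun x (hx : c < x) => by
    dsimp only
    rw [pdf_of_nonneg (by linarith), cdf, if_neg (by linarith)]
    have key : exp (-b⁻¹ * x) * exp (-(x - c) / b) = exp (c / b) * exp (-(2 / b) * x) := by
      rw [← exp_add, ← exp_add]; ring_nf
    linear_combination -key / (4 * b)
  have hb₁ : -b⁻¹ < 0 := neg_neg_iff_pos.2 (inv_pos.2 hb)
  have hb₂ : -(2 / b) < 0 := neg_neg_iff_pos.2 (by positivity)
  rw [setIntegral_congr_fun measurableSet_Ioi h,
    integral_sub ((integrableOn_exp_mul_Ioi hb₁ c).const_mul _)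
      ((integrableOn_exp_mul_Ioi hb₂ c).const_mul _),
    integral_const_mul, integral_const_mul, integral_exp_mul_Ioi hb₁, integral_exp_mul_Ioi hb₂]
  have key : exp (c / b) * exp (-(2 / b) * c) = exp (-c / b) := by
    rw [← exp_add]; ring_nf
  rw [show -b⁻¹ * c = -c / b by ring, neg_div_neg_eq, neg_div_neg_eq, ← key]
  field_simp
  ring

lemma integral_pdf_mul_cdf_sub (hb : 0 < b) (hc : 0 ≤ c) :
    ∫ x, pdf b x * cdf b (x - c) = exp (-c / b) * (1 / 2 + c / (4 * b)) := by
  set f := fun x => pdf b x * cdf b (x - c)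
  have hf : Integrable f := integrable_pdf_mul_cdf_sub hb c
  rw [← intervalIntegral.integral_Iic_add_Ioi hf.integrableOn hf.integrableOn,
    ← sub_add_cancel (∫ x in Iic c, f x) (∫ x in Iic 0, f x),
    intervalIntegral.integral_Iic_sub_Iic hf.integrableOn hf.integrableOn,
    intervalIntegral_pdf_mul_cdf_sub hc, integral_pdf_mul_cdf_sub_Iic_zero hb hc,
    integral_pdf_mul_cdf_sub_Ioi hb hc]
  field_simp
  ring

end Laplace

open Laplace

lemma lapMeasure_eq_withDensity (b : ℝ) :
    lapMeasure b = volume.withDensity fun x => ENNReal.ofReal (pdf b x) := rfl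

instance (b : ℝ) : SigmaFinite (lapMeasure b) := SigmaFinite.withDensity_ofReal _

lemma lapMeasure_apply {b : ℝ} (hb : 0 < b) {s : Set ℝ} (hs : MeasurableSet s) :
    lapMeasure b s = ENNReal.ofReal (∫ x in s, pdf b x) := by
  rw [lapMeasure_eq_withDensity, withDensity_apply _ hs, ofReal_integral_eq_lintegral_ofReal
    (integrable_pdf hb).integrableOn (.of_forall (pdf_nonneg hb.le))]

lemma lapMeasure_Iio {b : ℝ} (hb : 0 < b) (t : ℝ) :
    lapMeasure b (Iio t) = ENNReal.ofReal (cdf b t) := by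
  rw [lapMeasure_apply hb measurableSet_Iio, integral_pdf_Iio hb]

lemma lapMeasure_pi_fin_two_add_lt {b : ℝ} (hb : 0 < b) {c : ℝ} (hc : 0 ≤ c) :
    (Measure.pi fun _ : Fin 2 => lapMeasure b) {η | η 1 + c < η 0}
      = ENNReal.ofReal (exp (-c / b) * (1 / 2 + c / (4 * b))) := by
  have hS : MeasurableSet {p : ℝ × ℝ | p.2 + c < p.1} :=
    measurableSet_lt (measurable_snd.add_const c) measurable_fst
  have hslice (x : ℝ) : Prod.mk x ⁻¹' {p : ℝ × ℝ | p.2 + c < p.1} = Iio (x - c) := by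
    ext y; simp [lt_sub_iff_add_lt]
  change (Measure.pi fun _ : Fin 2 => lapMeasure b)
    (MeasurableEquiv.finTwoArrow ⁻¹' {p : ℝ × ℝ | p.2 + c < p.1}) = _
  rw [(measurePreserving_finTwoArrow (lapMeasure b)).measure_preimage hS.nullMeasurableSet,
    Measure.prod_apply hS]
  simp_rw [hslice, lapMeasure_Iio hb]
  rw [lapMeasure_eq_withDensity,
    lintegral_withDensity_eq_lintegral_mul _ (by fun_prop) (by fun_prop)]
  simp_rw [Pi.mul_apply, ← ENNReal.ofReal_mul (pdf_nonneg hb.le _)]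
  rw [← ofReal_integral_eq_lintegral_ofReal (integrable_pdf_mul_cdf_sub hb c)
    (.of_forall fun x => mul_nonneg (pdf_nonneg hb.le x) (cdf_mem_Icc hb _).1),
    integral_pdf_mul_cdf_sub hb hc]

lemma setOf_forall_ne_zero_gt_fin_two (s : Fin 2 → ℝ) :
    {η : Fin 2 → ℝ | ∀ j, j ≠ 0 → s 0 + η 0 > s j + η j} =
      {η | η 1 + (s 1 - s 0) < η 0} := by
  ext η
  simp only [mem_ofPred_eq, Fin.forall_fin_two, ne_eq, not_true_eq_false, IsEmpty.forall_iff,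
    one_ne_zero, not_false_eq_true, forall_const, true_and]
  constructor <;> intro h <;> linarith

/-- Report-Noisy-Max with under-calibrated Laplace noise of scale `Δ/ε` (instead of the
required `2Δ/ε`) does not satisfy `ε`-differential privacy for score functions of
sensitivity `Δ`: some pair of neighboring score vectors and some index violate the `ε`-DP
inequality. -/
theorem report_noisy_max_undercalibrated_not_dp (ε Δ : ℝ) (hε : 0 < ε) (hΔ : 0 < Δ) :
    ∃ m : ℕ, 1 ≤ m ∧ ∃ s s' : Fin m → ℝ, (∀ j, |s j - s' j| ≤ Δ) ∧ ∃ i : Fin m,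
      ENNReal.ofReal (Real.exp ε) *
          (Measure.pi fun _ : Fin m => lapMeasure (Δ / ε))
            {η : Fin m → ℝ | ∀ j, j ≠ i → s' i + η i > s' j + η j} <
        (Measure.pi fun _ : Fin m => lapMeasure (Δ / ε))
          {η : Fin m → ℝ | ∀ j, j ≠ i → s i + η i > s j + η j} := by
  have hb : 0 < Δ / ε := div_pos hΔ hε
  refine ⟨2, one_le_two, ![Δ, Δ], ![0, 2 * Δ], ?_, 0, ?_⟩
  · intro j
    fin_cases j <;> simp [two_mul, abs_of_pos hΔ]
  rw [setOf_forall_ne_zero_gt_fin_two, setOf_forall_ne_zero_gt_fin_two]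
  simp only [Matrix.cons_val_zero, Matrix.cons_val_one, sub_self, sub_zero]
  rw [lapMeasure_pi_fin_two_add_lt hb (by positivity), lapMeasure_pi_fin_two_add_lt hb le_rfl,
    ← ENNReal.ofReal_mul (exp_pos ε).le, ENNReal.ofReal_lt_ofReal_iff (by norm_num)]
  have hexp : exp ε * exp (-(2 * Δ) / (Δ / ε)) = (exp ε)⁻¹ := by
    rw [← exp_neg, ← exp_add]; congr 1; field_simp; ring
  have hlin : 2 * Δ / (4 * (Δ / ε)) = ε / 2 := by field_simp; ring
  rw [← mul_assoc, hexp, hlin, neg_zero, zero_div, zero_div, exp_zero, one_mul, add_zero,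
    inv_mul_lt_iff₀ (exp_pos ε)]
  linarith [add_one_lt_exp hε.ne']
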